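/- arXiv:1309.5277 — 3 statements merged into one kernel-verified Lean document; each statement's English description precedes it below -/
import Mathlib

section
/- Let A be an invertible d×d matrix over ℚ and let v = (t₁,…,t_d) ∈ ℝ^d be a nonzero vector with Aᵀv = λv for some real λ > 0 with λ ≠ 1. Then the map ψ : ℤ ⋉_A ℚ^d → Aff₊(ℝ) defined by ψ(n,h) = (x ↦ λⁿx + ⟨v,h⟩), where ⟨v,h⟩ = Σᵢ tᵢhᵢ, is a group homomorphism with non-Abelian image, and ψ is injective if and only if t₁,…,t_d are linearly independent over ℚ. -/
open Matrix Set

noncomputable section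

/-- The group `Aff₊(ℝ)` of orientation-preserving affine transformations `x ↦ a·x + b`
(`a > 0`, composition as group law), as a subgroup of the permutation group of `ℝ`. -/
def AffPos : Subgroup (Equiv.Perm ℝ) where
  carrier := { e | ∃ a b : ℝ, 0 < a ∧ ∀ x, e x = a * x + b }
  one_mem' := ⟨1, 0, one_pos, fun x => by simp⟩
  mul_mem' := by
    rintro e₁ e₂ ⟨a₁, b₁, ha₁, h₁⟩ ⟨a₂, b₂, ha₂, h₂⟩
    refine ⟨a₁ * a₂, a₁ * b₂ + b₁, mul_pos ha₁ ha₂, fun x => ?_⟩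
    simp only [Equiv.Perm.mul_apply, h₁, h₂]; ring
  inv_mem' := by
    rintro e ⟨a, b, ha, h⟩
    refine ⟨a⁻¹, -b / a, inv_pos.mpr ha, fun x => ?_⟩
    have key : e (a⁻¹ * x + -b / a) = x := by rw [h]; field_simp; ring
    conv_lhs => rw [← key]
    exact Equiv.symm_apply_apply e _

/-- The semidirect product `G = ℤ ⋉_A ℚ^d`, the action of the generator of the `ℤ`-factor
being the additive automorphism `e` of `ℚ^d` (given by the matrix `A`). -/
abbrev GFull (d : ℕ) (e : (Fin d → ℚ) ≃+ (Fin d → ℚ)) : Type :=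
  SemidirectProduct (Multiplicative (Fin d → ℚ)) (Multiplicative ℤ)
    (zpowersHom (MulAut (Multiplicative (Fin d → ℚ))) (AddEquiv.toMultiplicative e))

/-- The element `(n, h)` of `ℤ ⋉_A ℚ^d`. -/
def elemF {d : ℕ} {e : (Fin d → ℚ) ≃+ (Fin d → ℚ)} (n : ℤ) (b : Fin d → ℚ) : GFull d e :=
  ⟨Multiplicative.ofAdd b, Multiplicative.ofAdd n⟩

/-!
Since `v` is an eigenvector of `Aᵀ`, the pairing `c h = ⟨v, h⟩` satisfies `c (A h) = λ c h`, so
conjugating the translation by `c h` with the dilation by `λ` gives the translation by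
`c (A h)`: translations by `c` and powers of the dilation obey the relation of the semidirect
product and combine to `ψ`. As `λ > 0` and `λ ≠ 1`, `ψ (n, h) = (x ↦ λⁿ x + c h)` is trivial only
when `n = 0` and `c h = 0`, so `ψ` is injective exactly when `c` is, i.e. when the `tᵢ` are
linearly independent over `ℚ`; and the dilation by `λ` does not commute with a translation by
`c h ≠ 0`.
-/

open Function

def affMap (a b : ℝ) (ha : 0 < a) : AffPos :=
  ⟨{ toFun := fun x => a * x + b
     invFun := fun x => (x - b) / a
     left_inv := fun x => by field_simp; ring
     right_inv := fun x => by field_simp; ring }, a, b, ha, fun _ => rfl⟩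

@[simp]
lemma affMap_apply (a b : ℝ) (ha : 0 < a) (x : ℝ) :
    (affMap a b ha : Equiv.Perm ℝ) x = a * x + b := rfl

lemma affMap_mul {a₁ b₁ a₂ b₂ : ℝ} (h₁ : 0 < a₁) (h₂ : 0 < a₂) :
    affMap a₁ b₁ h₁ * affMap a₂ b₂ h₂ = affMap (a₁ * a₂) (a₁ * b₂ + b₁) (mul_pos h₁ h₂) := by
  ext x
  simp only [Subgroup.coe_mul, Equiv.Perm.mul_apply, affMap_apply]
  ring

lemma affMap_inj {a b a' b' : ℝ} (ha : 0 < a) (ha' : 0 < a') :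
    affMap a b ha = affMap a' b' ha' ↔ a = a' ∧ b = b' := by
  refine ⟨fun h => ?_, fun ⟨ha, hb⟩ => by subst ha hb; rfl⟩
  have h₀ := congrArg (fun f : AffPos => (f : Equiv.Perm ℝ) 0) h
  have h₁ := congrArg (fun f : AffPos => (f : Equiv.Perm ℝ) 1) h
  simp only [affMap_apply, mul_zero, zero_add, mul_one] at h₀ h₁
  exact ⟨by linarith, h₀⟩

lemma affMap_one_zero : affMap 1 0 one_pos = 1 := by
  ext x
  simp

def translationHom : Multiplicative ℝ →* AffPos where
  toFun t := affMap 1 t.toAdd one_pos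
  map_one' := affMap_one_zero
  map_mul' s t := by
    rw [affMap_mul, affMap_inj]
    simp [add_comm]

lemma translationHom_apply (t : Multiplicative ℝ) :
    translationHom t = affMap 1 t.toAdd one_pos := rfl

def dilationHom {lam : ℝ} (hlam : 0 < lam) : Multiplicative ℤ →* AffPos where
  toFun n := affMap (lam ^ n.toAdd) 0 (zpow_pos hlam _)
  map_one' := by
    rw [← affMap_one_zero, affMap_inj]
    simp
  map_mul' m n := by
    rw [affMap_mul, affMap_inj]
    simp [zpow_add₀ hlam.ne']

lemma dilationHom_apply {lam : ℝ} (hlam : 0 < lam) (n : Multiplicative ℤ) :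
    dilationHom hlam n = affMap (lam ^ n.toAdd) 0 (zpow_pos hlam _) := rfl

lemma conj_dilationHom_translationHom {lam : ℝ} (hlam : 0 < lam) (n : Multiplicative ℤ)
    (t : ℝ) :
    MulAut.conj (dilationHom hlam n) (translationHom (.ofAdd t)) =
      translationHom (.ofAdd (lam ^ n.toAdd * t)) := by
  rw [MulAut.conj_apply, mul_inv_eq_iff_eq_mul, translationHom_apply, translationHom_apply,
    dilationHom_apply, affMap_mul, affMap_mul, affMap_inj]
  simp

lemma map_toMultiplicative_zpow_apply {M : Type*} [AddGroup M] (c : M →+ ℝ) (e : M ≃+ M)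
    {lam : ℝ} (hlam : lam ≠ 0) (hce : ∀ m, c (e m) = lam * c m) (n : ℤ)
    (m : Multiplicative M) :
    c ((AddEquiv.toMultiplicative e ^ n) m).toAdd = lam ^ n * c m.toAdd := by
  have hce_symm (m : M) : c (e.symm m) = lam⁻¹ * c m := by
    rw [eq_inv_mul_iff_mul_eq₀ hlam, ← hce, e.apply_symm_apply]
  induction n using Int.induction_on generalizing m with
  | zero => simp
  | succ k ih =>
    rw [_root_.zpow_add_one, MulAut.mul_apply, ih, zpow_add_one₀ hlam, mul_assoc]
    exact congrArg (lam ^ (k : ℤ) * ·) (hce m.toAdd)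
  | pred k ih =>
    rw [_root_.zpow_sub_one, MulAut.mul_apply, ih, zpow_sub_one₀ hlam, mul_assoc]
    exact congrArg (lam ^ (-(k : ℤ)) * ·) (hce_symm m.toAdd)

section AffineRep

variable {M : Type*} [AddGroup M] (e : M ≃+ M) (c : M →+ ℝ) {lam : ℝ} (hlam : 0 < lam)
  (hce : ∀ m, c (e m) = lam * c m)

def affineRep :
    Multiplicative M ⋊[zpowersHom _ (AddEquiv.toMultiplicative e)] Multiplicative ℤ →* AffPos :=
  SemidirectProduct.lift (translationHom.comp c.toMultiplicative) (dilationHom hlam)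
    fun n => MonoidHom.ext fun m => by
      change translationHom (.ofAdd (c ((AddEquiv.toMultiplicative e ^ n.toAdd) m).toAdd)) =
        MulAut.conj (dilationHom hlam n) (translationHom (.ofAdd (c m.toAdd)))
      rw [conj_dilationHom_translationHom, map_toMultiplicative_zpow_apply c e hlam.ne' hce]

lemma affineRep_apply (g : Multiplicative M ⋊[zpowersHom _ (AddEquiv.toMultiplicative e)]
    Multiplicative ℤ) :
    affineRep e c hlam hce g = affMap (lam ^ g.right.toAdd) (c g.left.toAdd) (zpow_pos hlam _) := by
  change translationHom (.ofAdd (c g.left.toAdd)) * dilationHom hlam g.right = _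
  rw [translationHom_apply, dilationHom_apply, affMap_mul, affMap_inj]
  simp

lemma affineRep_injective_iff (hlam1 : lam ≠ 1) :
    Injective (affineRep e c hlam hce) ↔ Injective c := by
  constructor
  · intro hψ m m' hm
    have h : affineRep e c hlam hce (SemidirectProduct.inl (.ofAdd m)) =
        affineRep e c hlam hce (SemidirectProduct.inl (.ofAdd m')) := by
      rw [affineRep_apply, affineRep_apply, affMap_inj]
      exact ⟨rfl, hm⟩
    simpa using hψ h
  · intro hc g g' h
    rw [affineRep_apply, affineRep_apply, affMap_inj] at h
    exact SemidirectProduct.ext (Multiplicative.toAdd.injective (hc h.2))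
      (Multiplicative.toAdd.injective (zpow_right_injective₀ hlam hlam1 h.1))

lemma affineRep_not_commute (hlam1 : lam ≠ 1) {m : M} (hm : c m ≠ 0) :
    ¬ Commute (affineRep e c hlam hce (.inr (.ofAdd 1)))
      (affineRep e c hlam hce (.inl (.ofAdd m))) := by
  intro h
  rw [Commute, SemiconjBy, affineRep_apply, affineRep_apply, affMap_mul, affMap_mul,
    affMap_inj] at h
  simp [mul_eq_right₀, hlam1, hm] at h

end AffineRep

lemma Fintype.linearCombination_rat_apply {ι K : Type*} [Fintype ι] [Field K] [CharZero K]
    (v : ι → K) (h : ι → ℚ) :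
    Fintype.linearCombination ℚ v h = v ⬝ᵥ fun i => (h i : K) := by
  simp only [Fintype.linearCombination_apply, Rat.smul_def, dotProduct, mul_comm]

lemma linearCombination_mulVec_of_transpose_mulVec_eq_smul {ι K : Type*} [Fintype ι] [Field K]
    [CharZero K] {A : Matrix ι ι ℚ} {v : ι → K} {lam : K}
    (heig : (A.map (fun q : ℚ => (q : K)))ᵀ *ᵥ v = lam • v) (h : ι → ℚ) :
    Fintype.linearCombination ℚ v (A *ᵥ h) = lam * Fintype.linearCombination ℚ v h := by
  have hcast : (fun i => ((A *ᵥ h) i : K)) = A.map (fun q : ℚ => (q : K)) *ᵥ fun i => (h i : K) :=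
    funext fun i => (Rat.castHom K).map_mulVec A h i
  rw [Fintype.linearCombination_rat_apply, Fintype.linearCombination_rat_apply, hcast,
    dotProduct_mulVec, ← mulVec_transpose, heig, smul_dotProduct, smul_eq_mul]

theorem stmt_1_general {d : ℕ} (A : Matrix (Fin d) (Fin d) ℚ)
    (e : (Fin d → ℚ) ≃+ (Fin d → ℚ)) (he : ∀ x : Fin d → ℚ, e x = A.mulVec x)
    (v : Fin d → ℝ) (hv : v ≠ 0) (lam : ℝ) (hlam : 0 < lam) (hlam1 : lam ≠ 1)
    (heig : (A.map (fun q : ℚ => (q : ℝ))).transpose.mulVec v = lam • v) :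
    ∃ ψ : GFull d e →* AffPos,
      (∀ (n : ℤ) (h : Fin d → ℚ) (x : ℝ),
        ((ψ (elemF n h) : Equiv.Perm ℝ)) x = lam ^ n * x + ∑ i, v i * (h i : ℝ)) ∧
      (∃ g₁ g₂ : GFull d e, ψ g₁ * ψ g₂ ≠ ψ g₂ * ψ g₁) ∧
      (Function.Injective ψ ↔ LinearIndependent ℚ v) := by
  set c : (Fin d → ℚ) →+ ℝ := (Fintype.linearCombination ℚ v).toAddMonoidHom
  have hce (h : Fin d → ℚ) : c (e h) = lam * c h := by
    rw [he]
    exact linearCombination_mulVec_of_transpose_mulVec_eq_smul heig h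
  refine ⟨affineRep e c hlam hce, fun n h x => ?_, ?_, ?_⟩
  · rw [affineRep_apply, affMap_apply]
    simp [elemF, c, Fintype.linearCombination_rat_apply, dotProduct]
  · obtain ⟨i, hi⟩ := Function.ne_iff.mp hv
    refine ⟨_, _, affineRep_not_commute e c hlam hce hlam1 (m := Pi.single i 1) ?_⟩
    simpa [c] using hi
  · rw [affineRep_injective_iff e c hlam hce hlam1,
      linearIndependent_iff_injective_fintypeLinearCombination]
    rfl

/-- If `Aᵀ v = λ v` with `λ > 0`, `λ ≠ 1`, `v ≠ 0`, then
`(n,h) ↦ (x ↦ λⁿ x + ⟨v,h⟩)` is a homomorphism `ℤ ⋉_A ℚ^d → Aff₊(ℝ)` with non-Abelian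
image, injective iff the coordinates of `v` are linearly independent over `ℚ`. -/
theorem stmt_1 {d : ℕ} (hd : 0 < d) (A : Matrix (Fin d) (Fin d) ℚ) (hA : IsUnit A.det)
    (e : (Fin d → ℚ) ≃+ (Fin d → ℚ)) (he : ∀ x : Fin d → ℚ, e x = A.mulVec x)
    (v : Fin d → ℝ) (hv : v ≠ 0) (lam : ℝ) (hlam : 0 < lam) (hlam1 : lam ≠ 1)
    (heig : (A.map (fun q : ℚ => (q : ℝ))).transpose.mulVec v = lam • v) :
    ∃ ψ : GFull d e →* AffPos,
      (∀ (n : ℤ) (h : Fin d → ℚ) (x : ℝ),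
        ((ψ (elemF n h) : Equiv.Perm ℝ)) x = lam ^ n * x + ∑ i, v i * (h i : ℝ)) ∧
      (∃ g₁ g₂ : GFull d e, ψ g₁ * ψ g₂ ≠ ψ g₂ * ψ g₁) ∧
      (Function.Injective ψ ↔ LinearIndependent ℚ v) :=
  stmt_1_general A e he v hv lam hlam hlam1 heig

end
end

section
/- Suppose the invertible d×d matrix A over ℚ is ℚ-irreducible. If λ ∈ ℝ and v = (t₁,…,t_d) ∈ ℝ^d is a nonzero vector such that Aᵀv = λv, then the real numbers t₁,…,t_d are linearly independent over ℚ. -/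
/-!
The rational relations `w` with `∑ wᵢ vᵢ = 0` form a subspace of `ℚ^d`, which is `A`-invariant
because `∑ (A w)ᵢ vᵢ = ∑ wⱼ (Aᵀ v)ⱼ = λ ∑ wⱼ vⱼ`, and proper because `v ≠ 0`.
Irreducibility forces it to be zero.
-/

open Matrix Set

noncomputable section

/-- A matrix `A` is `ℚ`-irreducible if the only `ℚ`-linear subspaces of `ℚ^d`
invariant under `A` are `{0}` and `ℚ^d`. -/
def QIrreducible {d : ℕ} (A : Matrix (Fin d) (Fin d) ℚ) : Prop :=
  ∀ W : Submodule ℚ (Fin d → ℚ), (∀ v ∈ W, A.mulVec v ∈ W) → W = ⊥ ∨ W = ⊤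

/-- `z : ℂ` is an eigenvalue of the rational matrix `A`, i.e. a root of its
characteristic polynomial. -/
def IsEigC {d : ℕ} (A : Matrix (Fin d) (Fin d) ℚ) (z : ℂ) : Prop :=
  (A.charpoly.map (algebraMap ℚ ℂ)).IsRoot z

/-- A rational matrix is hyperbolic if no complex eigenvalue has modulus `1`. -/
def Hyperbolic {d : ℕ} (A : Matrix (Fin d) (Fin d) ℚ) : Prop :=
  ∀ z : ℂ, IsEigC A z → ‖z‖ ≠ 1

section CommSemiring

variable {K L ι : Type*} [Fintype ι] [CommSemiring K] [CommSemiring L] [Algebra K L]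

theorem Fintype.linearCombination_eq_dotProduct (v : ι → L) (w : ι → K) :
    Fintype.linearCombination K v w = (algebraMap K L ∘ w) ⬝ᵥ v := by
  simp only [Fintype.linearCombination_apply, Algebra.smul_def, dotProduct, Function.comp_apply]

theorem Fintype.linearCombination_smul_family (c : L) (v : ι → L) (w : ι → K) :
    Fintype.linearCombination K (c • v) w = c * Fintype.linearCombination K v w := by
  simp only [Fintype.linearCombination_eq_dotProduct, dotProduct_smul, smul_eq_mul]

theorem Fintype.linearCombination_mulVec (A : Matrix ι ι K) (v : ι → L) (w : ι → K) :
    Fintype.linearCombination K v (A *ᵥ w) =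
      Fintype.linearCombination K ((A.map (algebraMap K L))ᵀ *ᵥ v) w := by
  have hmap : algebraMap K L ∘ (A *ᵥ w) = A.map (algebraMap K L) *ᵥ (algebraMap K L ∘ w) :=
    funext (RingHom.map_mulVec _ A w)
  rw [Fintype.linearCombination_eq_dotProduct, Fintype.linearCombination_eq_dotProduct, hmap,
    dotProduct_comm, dotProduct_mulVec, ← vecMul_transpose, transpose_transpose, dotProduct_comm]

theorem Fintype.ker_linearCombination_ne_top {v : ι → L} (hv : v ≠ 0) :
    LinearMap.ker (Fintype.linearCombination K v) ≠ ⊤ := by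
  classical
  intro htop
  refine hv (funext fun i => ?_)
  have hi : Pi.single i 1 ∈ LinearMap.ker (Fintype.linearCombination K v) :=
    htop ▸ Submodule.mem_top
  simpa [Fintype.linearCombination_apply_single] using hi

theorem Matrix.mulVec_mem_ker_linearCombination_of_transpose_mulVec_eq_smul
    {A : Matrix ι ι K} {c : L} {v : ι → L} (heig : (A.map (algebraMap K L))ᵀ *ᵥ v = c • v)
    {w : ι → K} (hw : w ∈ LinearMap.ker (Fintype.linearCombination K v)) :
    A *ᵥ w ∈ LinearMap.ker (Fintype.linearCombination K v) := by
  rw [LinearMap.mem_ker] at hw ⊢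
  rw [Fintype.linearCombination_mulVec, heig, Fintype.linearCombination_smul_family, hw, mul_zero]

end CommSemiring

theorem Matrix.linearIndependent_of_transpose_mulVec_eq_smul {K L ι : Type*} [Fintype ι]
    [CommRing K] [CommRing L] [Algebra K L] {A : Matrix ι ι K}
    (hirr : ∀ W : Submodule K (ι → K), (∀ w ∈ W, A *ᵥ w ∈ W) → W = ⊥ ∨ W = ⊤)
    {c : L} {v : ι → L} (hv : v ≠ 0) (heig : (A.map (algebraMap K L))ᵀ *ᵥ v = c • v) :
    LinearIndependent K v := by
  rw [linearIndependent_iff_injective_fintypeLinearCombination, ← LinearMap.ker_eq_bot]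
  exact (hirr _ fun _ => mulVec_mem_ker_linearCombination_of_transpose_mulVec_eq_smul heig)
    |>.resolve_right (Fintype.ker_linearCombination_ne_top hv)

theorem stmt_3_general {d : ℕ} (A : Matrix (Fin d) (Fin d) ℚ)
    (hirr : QIrreducible A) (lam : ℝ) (v : Fin d → ℝ) (hv : v ≠ 0)
    (heig : (A.map (fun q : ℚ => (q : ℝ))).transpose.mulVec v = lam • v) :
    LinearIndependent ℚ v :=
  linearIndependent_of_transpose_mulVec_eq_smul hirr hv heig

/-- For a `ℚ`-irreducible invertible matrix `A`, the coordinates of any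
nonzero real eigenvector of `Aᵀ` are linearly independent over `ℚ`. -/
theorem stmt_3 {d : ℕ} (A : Matrix (Fin d) (Fin d) ℚ) (hA : IsUnit A.det)
    (hirr : QIrreducible A) (lam : ℝ) (v : Fin d → ℝ) (hv : v ≠ 0)
    (heig : (A.map (fun q : ℚ => (q : ℝ))).transpose.mulVec v = lam • v) :
    LinearIndependent ℚ v :=
  stmt_3_general A hirr lam v hv heig

end
end

section
/- Let A be an invertible d×d matrix over ℚ such that 1 is not an eigenvalue of A (det(A − I) ≠ 0), let H be a subgroup of ℚ^d with A(H) = H whose ℚ-linear span equals ℚ^d, and let G = ℤ ⋉_A H. Then for every action ρ of G by orientation-preserving homeomorphisms of the circle ℝ/ℤ, the set P of points x ∈ ℝ/ℤ that are periodic under ρ(0,b) for every b ∈ H (i.e., for each b ∈ H there is a positive integer k with ρ(0,b)ᵏ(x) = x) is nonempty and G-invariant: ρ(g)(P) = P for every g ∈ G. -/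
/-!
Given `b ∈ H`, invertibility of `A - 1` and `span ℚ H = ℚ^d` give `c ∈ H` and `n > 0` with
`A c - c = n b`; hence `bⁿ = (a c a⁻¹) c⁻¹`, where `a c a⁻¹ = A c` commutes with `c`. Lifts of
commuting circle homeomorphisms commute, and translation numbers are additive on commuting lifts
and invariant under conjugation, so `ρ(b)ⁿ` has a lift of translation number `0`, i.e. a fixed
point. The maps `ρ(b)^{n_b}` commute, and a circle homeomorphism with a fixed point has one in
every nonempty closed invariant set (on a lift fixing `q`, orbits in `[q, q + 1]` are monotone);
compactness of the circle then yields a common fixed point. Invariance holds because `H` is normal.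
-/

open Matrix Set

noncomputable section

/-- The semidirect product `G = ℤ ⋉_A H`, where the generator `a` of the `ℤ`-factor acts
on the subgroup `H ≤ ℚ^d` by the restriction of the matrix `A`; this restriction (which is
well defined exactly when `A(H) = H`) is encoded as an additive automorphism `e` of `H`. -/
abbrev GSd {d : ℕ} (H : AddSubgroup (Fin d → ℚ)) (e : H ≃+ H) : Type :=
  SemidirectProduct (Multiplicative H) (Multiplicative ℤ)
    (zpowersHom (MulAut (Multiplicative H)) (AddEquiv.toMultiplicative e))

/-- The element `(n, h)` of `G = ℤ ⋉_A H`; thus `a = elemSd 1 0` and `H` is identified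
with the elements `elemSd 0 h`. -/
def elemSd {d : ℕ} {H : AddSubgroup (Fin d → ℚ)} {e : H ≃+ H} (n : ℤ) (b : H) : GSd H e :=
  ⟨Multiplicative.ofAdd b, Multiplicative.ofAdd n⟩

/-- The circle `ℝ/ℤ`. -/
abbrev Circle1 : Type := AddCircle (1:ℝ)

/-- A permutation of the circle `ℝ/ℤ` which is an orientation-preserving `C¹`
diffeomorphism: it admits a continuously differentiable lift `F : ℝ → ℝ` with everywhere
positive derivative satisfying `F (x+1) = F x + 1`. -/
def IsC1CirclePerm (σ : Equiv.Perm Circle1) : Prop :=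
  ∃ F : ℝ → ℝ, ContDiff ℝ 1 F ∧ (∀ x : ℝ, 0 < deriv F x) ∧ (∀ x : ℝ, F (x + 1) = F x + 1) ∧
    ∀ x : ℝ, σ (x : Circle1) = (F x : Circle1)

/-- A permutation of the circle `ℝ/ℤ` which is an orientation-preserving homeomorphism:
it admits a continuous strictly increasing lift `F : ℝ → ℝ` with `F (x+1) = F x + 1`. -/
def IsHomeoCirclePerm (σ : Equiv.Perm Circle1) : Prop :=
  ∃ F : ℝ → ℝ, StrictMono F ∧ Continuous F ∧ (∀ x : ℝ, F (x + 1) = F x + 1) ∧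
    ∀ x : ℝ, σ (x : Circle1) = (F x : Circle1)


open Function Filter Topology

theorem Monotone.exists_isFixedPt_mem {α : Type*} [ConditionallyCompleteLinearOrder α]
    [TopologicalSpace α] [OrderTopology α] {f : α → α} (hf : Monotone f) (hfc : Continuous f)
    {K : Set α} (hK : IsCompact K) (hfK : MapsTo f K K) {x : α} (hx : x ∈ K) :
    ∃ y ∈ K, IsFixedPt f y := by
  have horbit : ∀ n, f^[n] x ∈ K := fun n => hfK.iterate n hx
  have hbdd : range (fun n => f^[n] x) ⊆ K := range_subset_iff.2 horbit
  obtain ⟨y, hy⟩ : ∃ y, Tendsto (fun n => f^[n] x) atTop (𝓝 y) := by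
    rcases le_total x (f x) with h | h
    · exact ⟨_, tendsto_atTop_ciSup (hf.monotone_iterate_of_le_map h) (hK.bddAbove.mono hbdd)⟩
    · exact ⟨_, tendsto_atTop_ciInf (hf.antitone_iterate_of_map_le h) (hK.bddBelow.mono hbdd)⟩
  exact ⟨y, hK.isClosed.mem_of_tendsto hy (Eventually.of_forall horbit),
    isFixedPt_of_tendsto_iterate hy hfc.continuousAt⟩

namespace CircleDeg1Lift

def IsLift (f : CircleDeg1Lift) (σ : Equiv.Perm Circle1) : Prop :=
  Semiconj ((↑) : ℝ → Circle1) f σ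

variable {f g : CircleDeg1Lift} {σ σ' : Equiv.Perm Circle1}

theorem IsLift.mul (hf : IsLift f σ) (hg : IsLift g σ') : IsLift (f * g) (σ * σ') :=
  hf.comp_right hg

theorem IsLift.units_inv {u : CircleDeg1Liftˣ} (hu : IsLift u σ) : IsLift ↑u⁻¹ σ⁻¹ :=
  hu.inverses_right (units_apply_inv_apply u) fun _ => Equiv.Perm.inv_eq_iff_eq.2 rfl

theorem units_continuous (u : CircleDeg1Liftˣ) : Continuous u := by
  rw [← coe_toOrderIso]
  exact (toOrderIso u).continuous

theorem exists_isLift_of_isHomeoCirclePerm (h : IsHomeoCirclePerm σ) :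
    ∃ u : CircleDeg1Liftˣ, IsLift u σ := by
  obtain ⟨F, hmono, hcont, hper, hlift⟩ := h
  let f : CircleDeg1Lift := ⟨⟨F, hmono.monotone⟩, hper⟩
  have hunit : IsUnit f := isUnit_iff_bijective.2
    ⟨hmono.injective, (continuous_iff_surjective f).1 hcont⟩
  exact ⟨hunit.unit, fun x => (hlift x).symm⟩

theorem commute_translate_int (n : ℤ) (f : CircleDeg1Lift) :
    Commute (translate (Multiplicative.ofAdd (n : ℝ)) : CircleDeg1Lift) f :=
  commute_iff_commute.2 fun x => by simp only [translate_apply, map_int_add]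

theorem IsLift.eq_translate_mul (hf : IsLift f σ) (hg : IsLift g σ) (hfc : Continuous f)
    (hgc : Continuous g) : ∃ n : ℤ, f = translate (Multiplicative.ofAdd (n : ℝ)) * g := by
  obtain ⟨n, hn⟩ : f 0 - g 0 ∈ AddSubgroup.zmultiples (1 : ℝ) :=
    QuotientAddGroup.eq_iff_sub_mem.1 ((hf 0).trans (hg 0).symm)
  have hgn : Continuous (translate (Multiplicative.ofAdd (n : ℝ)) * g : CircleDeg1Lift) :=
    coe_mul _ g ▸ (units_continuous _).comp hgc
  refine ⟨n, ext <| congrFun <| (AddCircle.isCoveringMap_coe (1 : ℝ)).eq_of_comp_eq hfc hgn ?_ 0 ?_⟩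
  · funext y
    simp only [Function.comp_apply, mul_apply, translate_apply]
    rw [hf y, ← hg y]
    simp
  · simp only [mul_apply, translate_apply]
    simp only [zsmul_eq_mul, mul_one] at hn
    linarith

theorem IsLift.commute {u v : CircleDeg1Liftˣ} (hσ : Commute σ σ') (hu : IsLift u σ)
    (hv : IsLift v σ') : Commute (u : CircleDeg1Lift) v := by
  obtain ⟨n, hn⟩ := (hu.mul hv).eq_translate_mul (hσ.eq ▸ hv.mul hu)
    (by simpa using units_continuous (u * v)) (by simpa using units_continuous (v * u))
  have hconj : translationNumber (u * v) = translationNumber (v * u) := by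
    simpa [mul_assoc] using translationNumber_conj_eq u (v * u)
  have hn0 : (n : ℝ) = 0 := by
    have := translationNumber_mul_of_commute (commute_translate_int n (v * u))
    rw [← hn, hconj, translationNumber_translate] at this
    linarith
  simpa [hn0, Commute, SemiconjBy] using hn

end CircleDeg1Lift

open CircleDeg1Lift in
theorem exists_isFixedPt_commutator {π σ : Equiv.Perm Circle1} (hπ : IsHomeoCirclePerm π)
    (hσ : IsHomeoCirclePerm σ) (h : Commute (π * σ * π⁻¹) σ) :
    ∃ x, IsFixedPt ⇑(π * σ * π⁻¹ * σ⁻¹) x := by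
  obtain ⟨u, hu⟩ := exists_isLift_of_isHomeoCirclePerm hπ
  obtain ⟨v, hv⟩ := exists_isLift_of_isHomeoCirclePerm hσ
  set w := u * v * u⁻¹
  have hw : IsLift w (π * σ * π⁻¹) := by simpa [w] using (hu.mul hv).mul hu.units_inv
  have hcomm : Commute (w : CircleDeg1Lift) ↑v⁻¹ := (hw.commute h hv).units_inv_right
  have hzero : translationNumber (w * ↑v⁻¹) = ((0 : ℤ) : ℝ) := by
    rw [translationNumber_mul_of_commute hcomm, translationNumber_units_inv]
    simp [w, translationNumber_conj_eq]
  obtain ⟨x, hx⟩ := (translationNumber_eq_int_iff _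
    (by simpa using units_continuous (w * v⁻¹))).1 hzero
  refine ⟨x, ?_⟩
  rw [IsFixedPt, ← (hw.mul hv.units_inv) x, hx, Int.cast_zero, add_zero]

open CircleDeg1Lift in
theorem IsHomeoCirclePerm.exists_isFixedPt_mem {σ : Equiv.Perm Circle1}
    (hσ : IsHomeoCirclePerm σ) (hfix : ∃ p, IsFixedPt σ p) {K : Set Circle1} (hK : IsClosed K)
    (hσK : MapsTo σ K K) (hKne : K.Nonempty) : ∃ p ∈ K, IsFixedPt σ p := by
  obtain ⟨u, hu⟩ := exists_isLift_of_isHomeoCirclePerm hσ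
  obtain ⟨p₀, hp₀⟩ := hfix
  obtain ⟨q, rfl⟩ := QuotientAddGroup.mk_surjective p₀
  obtain ⟨m, hm⟩ : u q - q ∈ AddSubgroup.zmultiples (1 : ℝ) :=
    QuotientAddGroup.eq_iff_sub_mem.1 ((hu q).trans hp₀)
  simp only [zsmul_eq_mul, mul_one] at hm
  -- `F` is the lift of `σ` fixing `q`; being of degree one it also fixes `q + 1`.
  let F : ℝ → ℝ := fun x => u x - m
  have hF : ∀ x, (F x : Circle1) = σ x := fun x => by
    rw [← hu x]
    simp [F]
  have hFq : F q = q := by simp only [F]; linarith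
  have hFq1 : F (q + 1) = q + 1 := by simp only [F, map_add_one]; linarith
  have hFmono : Monotone F := fun x y hxy => sub_le_sub_right ((u : CircleDeg1Lift).monotone hxy) _
  have hmaps : MapsTo F (Icc q (q + 1) ∩ (↑) ⁻¹' K) (Icc q (q + 1) ∩ (↑) ⁻¹' K) :=
    fun x ⟨⟨hqx, hxq⟩, hxK⟩ => ⟨⟨hFq ▸ hFmono hqx, hFq1 ▸ hFmono hxq⟩,
      show (F x : Circle1) ∈ K from (hF x).symm ▸ hσK hxK⟩
  obtain ⟨p, hpK⟩ := hKne
  obtain ⟨y, ⟨hy, hyK⟩, hFy⟩ := hFmono.exists_isFixedPt_mem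
    ((units_continuous u).sub continuous_const)
    (isCompact_Icc.inter_right (hK.preimage continuous_quotient_mk')) hmaps
    (x := AddCircle.equivIco 1 q p)
    ⟨Ico_subset_Icc_self (Subtype.prop _),
      show ((_ : ℝ) : Circle1) ∈ K by rwa [AddCircle.coe_equivIco]⟩
  exact ⟨y, hyK, by rw [IsFixedPt, ← hF, hFy.eq]⟩

theorem IsHomeoCirclePerm.continuous {σ : Equiv.Perm Circle1} (hσ : IsHomeoCirclePerm σ) :
    Continuous σ := by
  obtain ⟨F, -, hFc, -, hF⟩ := hσ
  rw [(QuotientAddGroup.isQuotientMap_mk _).continuous_iff]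
  simpa [Function.comp_def, hF] using (AddCircle.continuous_mk' 1).comp hFc

theorem exists_isFixedPt_of_commute {ι : Type*} (σ : ι → Equiv.Perm Circle1)
    (hσ : ∀ i, IsHomeoCirclePerm (σ i)) (hcomm : ∀ i j, Commute (σ i) (σ j))
    (hfix : ∀ i, ∃ p, IsFixedPt (σ i) p) : ∃ p, ∀ i, IsFixedPt (σ i) p := by
  classical
  have hclosed : ∀ i, IsClosed (fixedPoints (σ i)) := fun i =>
    isClosed_fixedPoints (hσ i).continuous
  have hfinite : ∀ s : Finset ι, (univ ∩ ⋂ i ∈ s, fixedPoints (σ i)).Nonempty := by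
    intro s
    rw [univ_inter]
    induction s using Finset.induction_on with
    | empty => simp
    | insert i s _ ih =>
      have hmaps : MapsTo (σ i) (⋂ j ∈ s, fixedPoints (σ j)) (⋂ j ∈ s, fixedPoints (σ j)) :=
        fun p hp => mem_iInter₂.2 fun j hj =>
          (mem_iInter₂.1 hp j hj).map fun x => DFunLike.congr_fun (hcomm i j).eq x
      obtain ⟨p, hps, hpi⟩ := (hσ i).exists_isFixedPt_mem (hfix i)
        (isClosed_biInter fun j _ => hclosed j) hmaps ih
      exact ⟨p, by rw [Finset.set_biInter_insert]; exact ⟨hpi, hps⟩⟩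
  obtain ⟨p, -, hp⟩ := isCompact_univ.inter_iInter_nonempty _ hclosed hfinite
  exact ⟨p, fun i => mem_iInter.1 hp i⟩

theorem image_iInter_periodicPts_eq {G α ι : Type*} [Group G] (ρ : G →* Equiv.Perm α)
    (s : ι → G) (hs : ∀ g i, ∃ j, g * s j * g⁻¹ = s i) (g : G) :
    ρ g '' ⋂ i, periodicPts (ρ (s i)) = ⋂ i, periodicPts (ρ (s i)) := by
  have hmaps : ∀ g, MapsTo (ρ g) (⋂ i, periodicPts (ρ (s i))) (⋂ i, periodicPts (ρ (s i))) := by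
    intro g p hp
    refine mem_iInter.2 fun i => ?_
    obtain ⟨j, hj⟩ := hs g i
    have hsemiconj : Semiconj (ρ g) (ρ (s j)) (ρ (s i)) := fun x => by simp [← hj]
    exact hsemiconj.mapsTo_periodicPts (mem_iInter.1 hp j)
  refine (hmaps g).image_subset.antisymm fun p hp => ⟨ρ g⁻¹ p, hmaps g⁻¹ hp, ?_⟩
  simp

theorem AddSubgroup.exists_nsmul_mem_of_mem_span {V : Type*} [AddCommGroup V] [Module ℚ V]
    (H : AddSubgroup V) {v : V} (hv : v ∈ Submodule.span ℚ (H : Set V)) :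
    ∃ n : ℕ, 0 < n ∧ n • v ∈ H := by
  induction hv using Submodule.span_induction with
  | mem x hx => exact ⟨1, one_pos, by simpa using hx⟩
  | zero => exact ⟨1, one_pos, by simp⟩
  | add x y _ _ hx hy =>
    obtain ⟨m, hm, hmx⟩ := hx
    obtain ⟨n, hn, hny⟩ := hy
    refine ⟨m * n, Nat.mul_pos hm hn, ?_⟩
    rw [show (m * n) • (x + y) = n • m • x + m • n • y by
      rw [smul_add, smul_smul, smul_smul, mul_comm n m]]
    exact H.add_mem (H.nsmul_mem hmx n) (H.nsmul_mem hny m)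
  | smul q x _ hx =>
    obtain ⟨n, hn, hnx⟩ := hx
    refine ⟨q.den * n, Nat.mul_pos q.pos hn, ?_⟩
    have : (q.den * n) • q • x = q.num • n • x := by
      rw [← Nat.cast_smul_eq_nsmul ℚ, ← Nat.cast_smul_eq_nsmul ℚ n, ← Int.cast_smul_eq_zsmul ℚ,
        smul_smul, smul_smul, ← Rat.mul_den_eq_num q]
      push_cast
      ring_nf
    rw [this]
    exact H.zsmul_mem hnx _

theorem exists_nsmul_eq_sub {d : ℕ} {A : Matrix (Fin d) (Fin d) ℚ} (hdet : (A - 1).det ≠ 0)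
    {H : AddSubgroup (Fin d → ℚ)} {e : H ≃+ H}
    (he : ∀ h : H, (e h : Fin d → ℚ) = A *ᵥ (h : Fin d → ℚ))
    (hspan : Submodule.span ℚ (H : Set (Fin d → ℚ)) = ⊤) (b : H) :
    ∃ n : ℕ, 0 < n ∧ ∃ c : H, e c - c = n • b := by
  set v := (A - 1)⁻¹ *ᵥ (b : Fin d → ℚ)
  obtain ⟨n, hn, hnv⟩ := H.exists_nsmul_mem_of_mem_span (hspan ▸ Submodule.mem_top : v ∈ _)
  refine ⟨n, hn, ⟨n • v, hnv⟩, Subtype.ext ?_⟩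
  have hv : (A - 1) *ᵥ v = b := by
    rw [mulVec_mulVec, mul_nonsing_inv _ (isUnit_iff_ne_zero.2 hdet), one_mulVec]
  simp only [AddSubgroup.coe_sub, AddSubgroup.coe_nsmul, he]
  rw [← hv, mulVec_smul, sub_mulVec, one_mulVec, smul_sub]

section SemidirectProduct

open SemidirectProduct

variable {d : ℕ} {H : AddSubgroup (Fin d → ℚ)} {e : H ≃+ H}

theorem elemSd_zero_eq_inl (b : H) : (elemSd 0 b : GSd H e) = inl (Multiplicative.ofAdd b) := rfl

theorem elemSd_zero_pow (b : H) (n : ℕ) : (elemSd 0 b : GSd H e) ^ n = elemSd 0 (n • b) := by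
  rw [elemSd_zero_eq_inl, elemSd_zero_eq_inl, ofAdd_nsmul, map_pow]

theorem elemSd_zero_sub (x y : H) :
    (elemSd 0 (x - y) : GSd H e) = elemSd 0 x * (elemSd 0 y)⁻¹ := by
  rw [elemSd_zero_eq_inl, elemSd_zero_eq_inl, elemSd_zero_eq_inl, ofAdd_sub, map_div,
    div_eq_mul_inv]

theorem commute_elemSd_zero (x y : H) : Commute (elemSd 0 x : GSd H e) (elemSd 0 y) :=
  (Commute.all (Multiplicative.ofAdd x) (Multiplicative.ofAdd y)).map inl

theorem elemSd_one_conj (c : H) :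
    elemSd 1 0 * elemSd 0 c * (elemSd 1 0)⁻¹ = (elemSd 0 (e c) : GSd H e) := by
  rw [show (elemSd 1 0 : GSd H e) = inr (Multiplicative.ofAdd 1) from rfl, elemSd_zero_eq_inl,
    elemSd_zero_eq_inl, ← map_inv, ← inl_aut]
  rfl

theorem exists_conj_elemSd_zero (g : GSd H e) (b : H) :
    ∃ c, g * elemSd 0 c * g⁻¹ = elemSd 0 b := by
  obtain ⟨c, hc⟩ : g⁻¹ * elemSd 0 b * g ∈ (inl : _ →* GSd H e).range := by
    rw [range_inl_eq_ker_rightHom, MonoidHom.mem_ker]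
    simp [elemSd_zero_eq_inl]
  exact ⟨Multiplicative.toAdd c, by simp [elemSd_zero_eq_inl, hc, mul_assoc]⟩

end SemidirectProduct

theorem exists_pow_isFixedPt {d : ℕ} {A : Matrix (Fin d) (Fin d) ℚ} (hdet : (A - 1).det ≠ 0)
    {H : AddSubgroup (Fin d → ℚ)} {e : H ≃+ H}
    (he : ∀ h : H, (e h : Fin d → ℚ) = A *ᵥ (h : Fin d → ℚ))
    (hspan : Submodule.span ℚ (H : Set (Fin d → ℚ)) = ⊤)
    (ρ : GSd H e →* Equiv.Perm Circle1) (hρ : ∀ g, IsHomeoCirclePerm (ρ g)) (b : H) :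
    ∃ n : ℕ, 0 < n ∧ ∃ p, IsFixedPt (ρ (elemSd 0 b ^ n)) p := by
  obtain ⟨n, hn, c, hc⟩ := exists_nsmul_eq_sub hdet he hspan b
  have hpow : (elemSd 0 b : GSd H e) ^ n =
      elemSd 1 0 * elemSd 0 c * (elemSd 1 0)⁻¹ * (elemSd 0 c)⁻¹ := by
    rw [elemSd_zero_pow, ← hc, elemSd_zero_sub, elemSd_one_conj]
  have hcomm :
      Commute (ρ (elemSd 1 0) * ρ (elemSd 0 c) * (ρ (elemSd 1 0))⁻¹) (ρ (elemSd 0 c)) := by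
    rw [← map_inv, ← map_mul, ← map_mul, elemSd_one_conj]
    exact (commute_elemSd_zero _ _).map ρ
  refine ⟨n, hn, ?_⟩
  rw [hpow, map_mul, map_mul, map_mul, map_inv, map_inv]
  exact exists_isFixedPt_commutator (hρ _) (hρ _) hcomm

theorem stmt_19_general {d : ℕ} (A : Matrix (Fin d) (Fin d) ℚ)
    (hdet : (A - 1).det ≠ 0) (H : AddSubgroup (Fin d → ℚ)) (e : H ≃+ H)
    (he : ∀ h : H, ((e h : Fin d → ℚ)) = A.mulVec (h : Fin d → ℚ))
    (hspan : Submodule.span ℚ (H : Set (Fin d → ℚ)) = ⊤)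
    (ρ : GSd H e →* Equiv.Perm Circle1) (hρ : ∀ g, IsHomeoCirclePerm (ρ g)) :
    ({p : Circle1 | ∀ b : H, ∃ k : ℕ, 0 < k ∧ ((ρ (elemSd 0 b)) ^ k) p = p}).Nonempty ∧
    ∀ g : GSd H e,
      (⇑(ρ g)) '' {p : Circle1 | ∀ b : H, ∃ k : ℕ, 0 < k ∧ ((ρ (elemSd 0 b)) ^ k) p = p}
        = {p : Circle1 | ∀ b : H, ∃ k : ℕ, 0 < k ∧ ((ρ (elemSd 0 b)) ^ k) p = p} := by
  have hP : {p : Circle1 | ∀ b : H, ∃ k : ℕ, 0 < k ∧ ((ρ (elemSd 0 b)) ^ k) p = p} =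
      ⋂ b : H, periodicPts (ρ (elemSd 0 b)) := by
    ext p
    simp [mem_periodicPts, IsPeriodicPt, IsFixedPt, Equiv.Perm.coe_pow]
  rw [hP]
  refine ⟨?_, image_iInter_periodicPts_eq ρ _ exists_conj_elemSd_zero⟩
  choose n hn hfix using exists_pow_isFixedPt hdet he hspan ρ hρ
  obtain ⟨p, hp⟩ := exists_isFixedPt_of_commute (fun b => ρ (elemSd 0 b ^ n b)) (fun b => hρ _)
    (fun b b' => ((commute_elemSd_zero b b').pow_pow _ _).map ρ) hfix
  refine ⟨p, mem_iInter.2 fun b => mk_mem_periodicPts (hn b) ?_⟩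
  simpa [IsPeriodicPt, Equiv.Perm.coe_pow] using hp b

/-- If `1` is not an eigenvalue of `A` (`det (A − I) ≠ 0`), then for
every action of `G = ℤ ⋉_A H` by orientation-preserving homeomorphisms of the circle
`ℝ/ℤ`, the set of common periodic points of the elements of `H` is nonempty and
`G`-invariant. -/
theorem stmt_19 {d : ℕ} (hd : 0 < d) (A : Matrix (Fin d) (Fin d) ℚ) (hA : IsUnit A.det)
    (hdet : (A - 1).det ≠ 0) (H : AddSubgroup (Fin d → ℚ)) (e : H ≃+ H)
    (he : ∀ h : H, ((e h : Fin d → ℚ)) = A.mulVec (h : Fin d → ℚ))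
    (hspan : Submodule.span ℚ (H : Set (Fin d → ℚ)) = ⊤)
    (ρ : GSd H e →* Equiv.Perm Circle1) (hρ : ∀ g, IsHomeoCirclePerm (ρ g)) :
    ({p : Circle1 | ∀ b : H, ∃ k : ℕ, 0 < k ∧ ((ρ (elemSd 0 b)) ^ k) p = p}).Nonempty ∧
    ∀ g : GSd H e,
      (⇑(ρ g)) '' {p : Circle1 | ∀ b : H, ∃ k : ℕ, 0 < k ∧ ((ρ (elemSd 0 b)) ^ k) p = p}
        = {p : Circle1 | ∀ b : H, ∃ k : ℕ, 0 < k ∧ ((ρ (elemSd 0 b)) ^ k) p = p} :=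
  stmt_19_general A hdet H e he hspan ρ hρ

end
end
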